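/- For the Kepler Hamiltonian H(q,p) = |p|²/2 − 1/|q| and K₊(q,p) = |q|(|p|²+1) − 2 on T*(ℝ³∖{0}), the canonical Poisson bracket satisfies {K₊, H} = (⟨q,p⟩/|q|²)·K₊(q,p). In particular {K₊,H} = 0 on the level set K₊⁻¹(0). -/

import Mathlib

open scoped RealInnerProductSpace

noncomputable section

abbrev E3 := EuclideanSpace ℝ (Fin 3)

/-- Canonical Poisson bracket on T*(ℝ³): {F,G} = Σᵢ (∂F/∂qᵢ ∂G/∂pᵢ − ∂F/∂pᵢ ∂G/∂qᵢ). -/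
def poissonBracket (F G : E3 × E3 → ℝ) (q p : E3) : ℝ :=
  ∑ i : Fin 3,
    (deriv (fun t : ℝ => F (q + t • EuclideanSpace.single i 1, p)) 0 *
       deriv (fun t : ℝ => G (q, p + t • EuclideanSpace.single i 1)) 0 -
     deriv (fun t : ℝ => F (q, p + t • EuclideanSpace.single i 1)) 0 *
       deriv (fun t : ℝ => G (q + t • EuclideanSpace.single i 1, p)) 0)

/-- Kepler Hamiltonian H(q,p) = |p|²/2 − 1/|q|. -/
def keplerH (qp : E3 × E3) : ℝ := ‖qp.2‖ ^ 2 / 2 - ‖qp.1‖⁻¹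

/-- K₊(q,p) = |q|(|p|²+1) − 2. -/
def Kplus (qp : E3 × E3) : ℝ := ‖qp.1‖ * (‖qp.2‖ ^ 2 + 1) - 2

lemma normsq_line (q e : E3) (t : ℝ) :
    ‖q + t • e‖ ^ 2 = ‖q‖ ^ 2 + 2 * ⟪q, e⟫ * t + ‖e‖ ^ 2 * t ^ 2 := by
  rw [norm_add_sq_real, real_inner_smul_right, norm_smul]
  simp [mul_pow, sq_abs]
  ring

lemma hasDerivAt_normsq_line (q e : E3) :
    HasDerivAt (fun t : ℝ => ‖q + t • e‖ ^ 2) (2 * ⟪q, e⟫) 0 := by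
  have h : HasDerivAt (fun t : ℝ => ‖q‖ ^ 2 + 2 * ⟪q, e⟫ * t + ‖e‖ ^ 2 * t ^ 2)
      (2 * ⟪q, e⟫) 0 := by
    have h1 := ((hasDerivAt_id (0:ℝ)).const_mul (2 * ⟪q, e⟫)).const_add (‖q‖ ^ 2)
    have h2 := (hasDerivAt_pow 2 (0:ℝ)).const_mul (‖e‖ ^ 2)
    have := h1.add h2
    refine this.congr_deriv ?_
    simp
  exact h.congr_of_eventuallyEq (by filter_upwards with t; exact (normsq_line q e t))

lemma hasDerivAt_norm_line (q e : E3) (hq : q ≠ 0) :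
    HasDerivAt (fun t : ℝ => ‖q + t • e‖) (⟪q, e⟫ / ‖q‖) 0 := by
  have hn : ‖q‖ ≠ 0 := norm_ne_zero_iff.mpr hq
  have hsq := (hasDerivAt_normsq_line q e).sqrt (by simpa [pow_ne_zero_iff] using hq)
  have heq : (fun t : ℝ => Real.sqrt (‖q + t • e‖ ^ 2)) = fun t : ℝ => ‖q + t • e‖ := by
    funext t; exact Real.sqrt_sq (norm_nonneg _)
  rw [heq] at hsq
  convert hsq using 1
  simp [Real.sqrt_sq (norm_nonneg q)]
  field_simp

lemma deriv_K_q (q p e : E3) (hq : q ≠ 0) :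
    deriv (fun t : ℝ => Kplus (q + t • e, p)) 0 = ⟪q, e⟫ / ‖q‖ * (‖p‖ ^ 2 + 1) := by
  have h := ((hasDerivAt_norm_line q e hq).mul_const (‖p‖ ^ 2 + 1)).sub_const 2
  exact h.deriv

lemma deriv_K_p (q p e : E3) :
    deriv (fun t : ℝ => Kplus (q, p + t • e)) 0 = ‖q‖ * (2 * ⟪p, e⟫) := by
  have h := (((hasDerivAt_normsq_line p e).add_const 1).const_mul ‖q‖).sub_const 2
  exact h.deriv

lemma deriv_H_q (q p e : E3) (hq : q ≠ 0) :
    deriv (fun t : ℝ => keplerH (q + t • e, p)) 0 = ⟪q, e⟫ / ‖q‖ ^ 3 := by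
  have hn : ‖q‖ ≠ 0 := norm_ne_zero_iff.mpr hq
  have h := ((hasDerivAt_norm_line q e hq).inv (by simpa using hn)).const_sub (‖p‖ ^ 2 / 2)
  have := h.deriv
  simp only [zero_smul, add_zero] at this
  rw [show (fun x : ℝ => ‖p‖ ^ 2 / 2 - (fun t : ℝ => ‖q + t • e‖)⁻¹ x) =
      (fun t : ℝ => keplerH (q + t • e, p)) from rfl] at this
  rw [this, neg_div, neg_neg, div_div]
  ring

lemma deriv_H_p (q p e : E3) :
    deriv (fun t : ℝ => keplerH (q, p + t • e)) 0 = ⟪p, e⟫ := by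
  have h := ((hasDerivAt_normsq_line p e).div_const 2).sub_const ‖q‖⁻¹
  have := h.deriv
  rw [show (fun t : ℝ => ‖p + t • e‖ ^ 2 / 2 - ‖q‖⁻¹) =
      (fun t : ℝ => keplerH (q, p + t • e)) from rfl] at this
  rw [this]
  ring

theorem kplus_poisson (q p : E3) (hq : q ≠ 0) :
    poissonBracket Kplus keplerH q p = (⟪q, p⟫ / ‖q‖ ^ 2) * Kplus (q, p) ∧
    (Kplus (q, p) = 0 → poissonBracket Kplus keplerH q p = 0) := by
  have hn : ‖q‖ ≠ 0 := norm_ne_zero_iff.mpr hq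
  have hmain : poissonBracket Kplus keplerH q p = (⟪q, p⟫ / ‖q‖ ^ 2) * Kplus (q, p) := by
    unfold poissonBracket
    have hin : (⟪q, p⟫ : ℝ) = ∑ i : Fin 3, q i * p i := by
      simp [PiLp.inner_apply, RCLike.inner_apply, mul_comm]
    rw [hin, Finset.sum_div, Finset.sum_mul]
    refine Finset.sum_congr rfl fun i _ => ?_
    rw [deriv_K_q q p _ hq, deriv_K_p q p _, deriv_H_q q p _ hq, deriv_H_p q p _]
    have hqe : (⟪q, EuclideanSpace.single i 1⟫ : ℝ) = q i := by
      simp [EuclideanSpace.inner_single_right]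
    have hpe : (⟪p, EuclideanSpace.single i 1⟫ : ℝ) = p i := by
      simp [EuclideanSpace.inner_single_right]
    rw [hqe, hpe]
    unfold Kplus
    field_simp
  exact ⟨hmain, fun h => by rw [hmain, h, mul_zero]⟩

end
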